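/- Let V₇ be a 7-dimensional vector space over an algebraically closed field of characteristic zero and let S₃ ⊆ ∧²V₇* be a 3-dimensional space of alternating forms such that every nonzero σ ∈ S₃ has rank 6. Then the map from nonzero elements of S₃ (up to scalar) to lines in V₇, sending σ to its kernel line ker(σ), is injective: if ker(σ₁) = ker(σ₂) for σ₁, σ₂ ∈ S₃ nonzero, then σ₁ and σ₂ are proportional. -/

import Mathlib

/-!
An alternating form has range equal to the annihilator of its kernel, so `σ₁` and `σ₂` have the
same range and "`σ₂ ∘ σ₁⁻¹`" is an endomorphism of it. Over an algebraically closed field it has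
an eigenvalue `c`, and then `σ₂ - c • σ₁` kills `ker σ₁` together with one more vector. Its rank is
therefore smaller than that of `σ₁`, so nondegeneracy forces `σ₂ - c • σ₁ = 0`.
-/

open Module LinearMap

section

variable {k V : Type*} [Field k] [AddCommGroup V] [Module k V]

theorem LinearMap.IsAlt.range_eq_dualAnnihilator_ker [FiniteDimensional k V]
    {σ : V →ₗ[k] V →ₗ[k] k} (hσ : σ.IsAlt) :
    range σ = (ker σ).dualAnnihilator := by
  refine Submodule.eq_of_le_of_finrank_eq ?_ ?_
  · rintro _ ⟨v, rfl⟩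
    rw [Submodule.mem_dualAnnihilator]
    intro w hw
    rw [← hσ.neg, show σ w = 0 from hw, zero_apply, neg_zero]
  · have h₁ := finrank_range_add_finrank_ker σ
    have h₂ : finrank k (ker σ) + finrank k (ker σ).dualAnnihilator = finrank k V :=
      Subspace.finrank_add_finrank_dualAnnihilator_eq (ker σ)
    exact (Nat.eq_sub_of_add_eq h₁).trans (Nat.eq_sub_of_add_eq' h₂).symm

theorem LinearMap.exists_apply_eq_smul_apply_of_range_le [IsAlgClosed k] [FiniteDimensional k V]
    {W : Type*} [AddCommGroup W] [Module k W] {f g : V →ₗ[k] W} (hf : f ≠ 0)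
    (hgf : range g ≤ range f) : ∃ c : k, ∃ v, f v ≠ 0 ∧ g v = c • f v := by
  obtain ⟨s, hs⟩ := f.rangeRestrict.exists_rightInverse_of_surjective f.range_rangeRestrict
  have : Nontrivial (range f) := Submodule.nontrivial_iff_ne_bot.mpr (range_eq_bot.not.mpr hf)
  obtain ⟨c, hc⟩ :=
    Module.End.exists_eigenvalue ((g.codRestrict (range f) fun v => hgf ⟨v, rfl⟩) ∘ₗ s)
  obtain ⟨φ, hφ⟩ := hc.exists_hasEigenvector
  have hfs : f (s φ) = φ := congrArg Subtype.val (LinearMap.congr_fun hs φ)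
  refine ⟨c, s φ, ?_, ?_⟩
  · rw [hfs]; exact_mod_cast hφ.2
  · rw [hfs]; exact congrArg Subtype.val hφ.apply_eq_smul

theorem LinearMap.IsAlt.exists_ker_lt_ker_sub_smul [IsAlgClosed k] [FiniteDimensional k V]
    {σ₁ σ₂ : V →ₗ[k] V →ₗ[k] k} (h₁ : σ₁.IsAlt) (h₂ : σ₂.IsAlt) (hσ₁ : σ₁ ≠ 0)
    (hker : ker σ₁ = ker σ₂) : ∃ c : k, ker σ₁ < ker (σ₂ - c • σ₁) := by
  have hrange : range σ₂ ≤ range σ₁ := by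
    rw [h₁.range_eq_dualAnnihilator_ker, h₂.range_eq_dualAnnihilator_ker, hker]
  obtain ⟨c, v, hv, hcv⟩ := exists_apply_eq_smul_apply_of_range_le hσ₁ hrange
  refine ⟨c, SetLike.lt_iff_le_and_exists.mpr ⟨fun x hx => ?_, v, ?_, hv⟩⟩
  · have hx₂ : σ₂ x = 0 := by rwa [← mem_ker, ← hker]
    simp [show σ₁ x = 0 from hx, hx₂]
  · simp [hcv]

end

theorem net_kernel_map_injective_general (k : Type) [Field k] [IsAlgClosed k]
    (V : Type) [AddCommGroup V] [Module k V] [FiniteDimensional k V]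
    (S₃ : Submodule k (V →ₗ[k] V →ₗ[k] k))
    (halt : ∀ σ ∈ S₃, ∀ v, σ v v = 0)
    (hnd : ∀ σ ∈ S₃, σ ≠ 0 → finrank k (LinearMap.range σ) = 6) :
    ∀ σ₁ ∈ S₃, ∀ σ₂ ∈ S₃, σ₁ ≠ 0 → σ₂ ≠ 0 →
      LinearMap.ker σ₁ = LinearMap.ker σ₂ → ∃ c : k, σ₂ = c • σ₁ := by
  intro σ₁ hσ₁ σ₂ hσ₂ hne₁ _ hker
  obtain ⟨c, hlt⟩ := IsAlt.exists_ker_lt_ker_sub_smul (halt σ₁ hσ₁) (halt σ₂ hσ₂) hne₁ hker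
  refine ⟨c, by_contra fun hne => ?_⟩
  have hmem : σ₂ - c • σ₁ ∈ S₃ := S₃.sub_mem (x := σ₂) hσ₂ (S₃.smul_mem c hσ₁)
  have h₁ := finrank_range_add_finrank_ker σ₁
  have h₂ := finrank_range_add_finrank_ker (σ₂ - c • σ₁)
  have hfinrank_lt := Submodule.finrank_lt_finrank_of_lt hlt
  rw [hnd σ₁ hσ₁ hne₁] at h₁
  rw [hnd _ hmem (sub_ne_zero.mpr hne)] at h₂
  omega

/-- For a nondegenerate net of skew forms on a 7-dimensional space, the map sending a
nonzero form in the net to its kernel line is injective up to scalars. -/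
theorem net_kernel_map_injective (k : Type) [Field k] [IsAlgClosed k] [CharZero k]
    (V : Type) [AddCommGroup V] [Module k V] [FiniteDimensional k V]
    (hV : finrank k V = 7)
    (S₃ : Submodule k (V →ₗ[k] V →ₗ[k] k))
    (halt : ∀ σ ∈ S₃, ∀ v, σ v v = 0)
    (hdim : finrank k S₃ = 3)
    (hnd : ∀ σ ∈ S₃, σ ≠ 0 → finrank k (LinearMap.range σ) = 6) :
    ∀ σ₁ ∈ S₃, ∀ σ₂ ∈ S₃, σ₁ ≠ 0 → σ₂ ≠ 0 →
      LinearMap.ker σ₁ = LinearMap.ker σ₂ → ∃ c : k, σ₂ = c • σ₁ :=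
  net_kernel_map_injective_general k V S₃ halt hnd
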